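/- Let C be a standard Cauchy variable and ε an independent Rademacher variable. For every x, y ∈ ℝ, sinh(arcsinh(C cosh x) + yε) has the same distribution as C cosh(x + yε). -/

import Mathlib

/-!
Both laws are equal-weight mixtures, over `ε = ±1`, of pushforwards of the standard Cauchy law
by increasing maps, so it suffices to compare distribution functions. With the Cauchy CDF
`arctan b / π + 1 / 2` this reduces to the identity
`arctan (sinh (arsinh a - y) / cosh x) + arctan (sinh (arsinh a + y) / cosh x)
  = arctan (a / cosh (x + y)) + arctan (a / cosh (x - y))`,
which holds because `arctan u + arctan v = arg ((1 + u i) (1 + v i))` and the two products are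
positive real multiples of each other.
-/

open MeasureTheory Real Set ProbabilityTheory
open scoped ENNReal

lemma arg_one_add_mul_I (u : ℝ) : Complex.arg (1 + u * Complex.I) = arctan u := by
  have hre : 0 < (1 + u * Complex.I).re := by simp
  obtain ⟨hlo, hhi⟩ := abs_lt.1 (Complex.abs_arg_lt_pi_div_two_iff.2 (Or.inl hre))
  rw [← arctan_tan hlo hhi, Complex.tan_arg]
  simp

lemma arctan_add_arctan_eq_arg (u v : ℝ) :
    arctan u + arctan v = Complex.arg ((1 + u * Complex.I) * (1 + v * Complex.I)) := by
  have hne (w : ℝ) : 1 + w * Complex.I ≠ 0 := fun h => by simpa using congrArg Complex.re h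
  have hsum : Complex.arg (1 + u * Complex.I) + Complex.arg (1 + v * Complex.I) ∈ Ioc (-π) π := by
    rw [arg_one_add_mul_I, arg_one_add_mul_I]
    constructor <;> linarith [neg_pi_div_two_lt_arctan u, neg_pi_div_two_lt_arctan v,
      arctan_lt_pi_div_two u, arctan_lt_pi_div_two v]
  rw [Complex.arg_mul (hne u) (hne v) hsum, arg_one_add_mul_I, arg_one_add_mul_I]

lemma arctan_add_arctan_eq_of_proportional {u v u' v' k : ℝ} (hk : 0 < k)
    (hre : 1 - u * v = k * (1 - u' * v')) (him : u + v = k * (u' + v')) :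
    arctan u + arctan v = arctan u' + arctan v' := by
  rw [arctan_add_arctan_eq_arg, arctan_add_arctan_eq_arg,
    ← Complex.arg_real_mul ((1 + u' * Complex.I) * (1 + v' * Complex.I)) hk]
  congr 1
  apply Complex.ext <;> simp <;> linarith

lemma arctan_sinh_arsinh_sub_add_arctan_sinh_arsinh_add (a x y : ℝ) :
    arctan (sinh (arsinh a - y) / cosh x) + arctan (sinh (arsinh a + y) / cosh x)
      = arctan (a / cosh (x + y)) + arctan (a / cosh (x - y)) := by
  have hcx := cosh_pos x
  have hp := cosh_pos (x + y)
  have hm := cosh_pos (x - y)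
  have hr : √(1 + a ^ 2) ^ 2 = 1 + a ^ 2 := sq_sqrt (by positivity)
  have hpm : cosh (x + y) * cosh (x - y) = cosh x ^ 2 + sinh y ^ 2 := by
    rw [cosh_add, cosh_sub]; linear_combination cosh x ^ 2 * cosh_sq y + sinh y ^ 2 * cosh_sq x
  refine arctan_add_arctan_eq_of_proportional (k := (cosh x ^ 2 + sinh y ^ 2) / cosh x ^ 2)
    (by positivity) ?_ ?_
  · rw [sinh_sub, sinh_add, sinh_arsinh, cosh_arsinh]
    field_simp
    linear_combination sinh y ^ 2 * (cosh (x + y) * cosh (x - y)) * hr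
      - a ^ 2 * (cosh (x + y) * cosh (x - y)) * cosh_sq y - a ^ 2 * hpm
  · rw [sinh_sub, sinh_add, sinh_arsinh, cosh_arsinh]
    field_simp
    linear_combination 2 * a * cosh x * cosh y * hpm
      - a * (cosh x ^ 2 + sinh y ^ 2) * (cosh_add x y + cosh_sub x y)

lemma ProbabilityTheory.IndepFun.map_eq_smul_add_smul {Ω α β γ : Type*} [MeasurableSpace Ω]
    [MeasurableSpace α] [MeasurableSpace β] [MeasurableSpace γ] {P : Measure Ω} [IsFiniteMeasure P]
    {X : Ω → α} {ε : Ω → β} (hX : Measurable X) (hε : Measurable ε) (hindep : IndepFun X ε P)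
    {a b : β} {p q : ℝ≥0∞} (hεlaw : P.map ε = p • Measure.dirac a + q • Measure.dirac b)
    {F : α × β → γ} (hF : Measurable F) :
    P.map (fun ω => F (X ω, ε ω))
      = p • (P.map X).map (fun c => F (c, a)) + q • (P.map X).map (fun c => F (c, b)) := by
  have hjoint : P.map (fun ω => (X ω, ε ω)) = (P.map X).prod (P.map ε) :=
    (indepFun_iff_map_prod_eq_prod_map_map hX.aemeasurable hε.aemeasurable).1 hindep
  change P.map (F ∘ fun ω => (X ω, ε ω)) = _
  rw [← Measure.map_map hF (hX.prodMk hε), hjoint, hεlaw, Measure.prod_add,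
    Measure.prod_smul_right, Measure.prod_smul_right, Measure.prod_dirac, Measure.prod_dirac,
    Measure.map_add _ _ hF, Measure.map_smul, Measure.map_smul,
    Measure.map_map hF measurable_prodMk_right, Measure.map_map hF measurable_prodMk_right]
  rfl

noncomputable def standardCauchy : Measure ℝ :=
  volume.withDensity (fun x => ENNReal.ofReal (1 / (π * (1 + x ^ 2))))

noncomputable def cauchyCDF (b : ℝ) : ℝ := arctan b / π + 1 / 2

lemma cauchyCDF_nonneg (b : ℝ) : 0 ≤ cauchyCDF b := by
  have h : 0 < arctan b + π / 2 := by linarith [neg_pi_div_two_lt_arctan b]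
  have hπ := pi_pos
  rw [cauchyCDF]
  field_simp
  linarith

lemma standardCauchy_Iic (b : ℝ) : standardCauchy (Iic b) = ENNReal.ofReal (cauchyCDF b) := by
  have hdens (x : ℝ) : 1 / (π * (1 + x ^ 2)) = π⁻¹ * (1 + x ^ 2)⁻¹ := by
    rw [one_div, mul_inv]
  have hint : Integrable (fun x : ℝ => π⁻¹ * (1 + x ^ 2)⁻¹) :=
    integrable_inv_one_add_sq.const_mul π⁻¹
  simp_rw [standardCauchy, hdens]
  rw [withDensity_apply _ measurableSet_Iic, ← ofReal_integral_eq_lintegral_ofReal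
    hint.integrableOn (.of_forall fun x => by positivity), integral_const_mul,
    integral_Iic_inv_one_add_sq, cauchyCDF]
  field_simp

lemma preimage_sinh_arsinh_mul_add_Iic {k : ℝ} (hk : 0 < k) (s a : ℝ) :
    (fun c => sinh (arsinh (c * k) + s)) ⁻¹' Iic a = Iic (sinh (arsinh a - s) / k) := by
  ext c
  simp only [mem_preimage, mem_Iic]
  have hsinh_le (u : ℝ) : sinh u ≤ a ↔ u ≤ arsinh a := by
    rw [← sinh_le_sinh (x := u) (y := arsinh a), sinh_arsinh]
  have hle_sinh (u w : ℝ) : u ≤ sinh w ↔ arsinh u ≤ w := by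
    rw [← arsinh_le_arsinh, arsinh_sinh]
  rw [le_div_iff₀ hk, hsinh_le, hle_sinh, le_sub_iff_add_le]

lemma standardCauchy_map_mul_Iic {k : ℝ} (hk : 0 < k) (a : ℝ) :
    (standardCauchy.map (· * k)) (Iic a) = ENNReal.ofReal (cauchyCDF (a / k)) := by
  rw [Measure.map_apply (by fun_prop) measurableSet_Iic, preimage_mul_const_Iic₀ a hk,
    standardCauchy_Iic]

lemma standardCauchy_map_sinh_arsinh_Iic {k : ℝ} (hk : 0 < k) (s a : ℝ) :
    (standardCauchy.map fun c => sinh (arsinh (c * k) + s)) (Iic a)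
      = ENNReal.ofReal (cauchyCDF (sinh (arsinh a - s) / k)) := by
  have hf : Continuous fun c => sinh (arsinh (c * k) + s) :=
    continuous_sinh.comp ((continuous_arsinh.comp (continuous_mul_const k)).add continuous_const)
  rw [Measure.map_apply hf.measurable measurableSet_Iic, preimage_sinh_arsinh_mul_add_Iic hk,
    standardCauchy_Iic]

theorem stmt_12 {Ω : Type*} [MeasurableSpace Ω] (P : Measure Ω) [IsProbabilityMeasure P]
    (C ε : Ω → ℝ) (hC : Measurable C) (hε : Measurable ε)
    (hCauchy : P.map C = volume.withDensity (fun x => ENNReal.ofReal (1 / (π * (1 + x ^ 2)))))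
    (hRad : P.map ε = ((1:ℝ≥0∞)/2) • Measure.dirac (1:ℝ) + ((1:ℝ≥0∞)/2) • Measure.dirac (-1:ℝ))
    (hindep : IndepFun C ε P)
    (x y : ℝ) :
    P.map (fun ω => Real.sinh (Real.arsinh (C ω * Real.cosh x) + y * ε ω))
      = P.map (fun ω => C ω * Real.cosh (x + y * ε ω)) := by
  have hlawC : P.map C = standardCauchy := hCauchy
  have hF : Measurable fun p : ℝ × ℝ => sinh (arsinh (p.1 * cosh x) + y * p.2) :=
    (continuous_sinh.comp ((continuous_arsinh.comp (continuous_fst.mul continuous_const)).add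
      (continuous_const.mul continuous_snd))).measurable
  have hG : Measurable fun p : ℝ × ℝ => p.1 * cosh (x + y * p.2) :=
    (continuous_fst.mul (continuous_cosh.comp
      (continuous_const.add (continuous_const.mul continuous_snd)))).measurable
  refine Measure.ext_of_Iic _ _ fun a => ?_
  rw [hindep.map_eq_smul_add_smul hC hε hRad hF, hindep.map_eq_smul_add_smul hC hε hRad hG]
  simp only [hlawC, Measure.add_apply, Measure.smul_apply, smul_eq_mul, mul_one, mul_neg]
  rw [standardCauchy_map_sinh_arsinh_Iic (cosh_pos x),
    standardCauchy_map_sinh_arsinh_Iic (cosh_pos x),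
    standardCauchy_map_mul_Iic (cosh_pos _), standardCauchy_map_mul_Iic (cosh_pos _),
    ← mul_add, ← mul_add, ← ENNReal.ofReal_add (cauchyCDF_nonneg _) (cauchyCDF_nonneg _),
    ← ENNReal.ofReal_add (cauchyCDF_nonneg _) (cauchyCDF_nonneg _)]
  congr 2
  simp only [cauchyCDF, sub_neg_eq_add, ← sub_eq_add_neg]
  linear_combination (arctan_sinh_arsinh_sub_add_arctan_sinh_arsinh_add a x y) / π
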